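/- Let (X,σ) be a shift space whose language 𝓛 admits a decomposition 𝓛 = 𝓒^p 𝓖 𝓒^s satisfying Conditions (I) and (II), where 𝓖 has (Per)-specification. Then lim_{n→∞} (1/n) log #Per(n) = h(𝓛) = h_top(X,σ). -/

import Mathlib

/-!
A point of period `k ≤ n` is determined by its first `n` symbols, so `#Per(n) ≤ n · #𝓛_n` and
`limsup (1/n) log #Per(n) ≤ h(𝓛)`. Conversely, (Per)-specification glues any `q` words of `𝓖_m`
into periodic points of period `q (m + t)`, pairwise distinct because the central cylinder of such
a point recovers the glued word; hence `#Per(q (m + t)) ≥ (#𝓖_m) ^ q`, and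
`liminf (1/n) log #Per(n) ≥ log #𝓖_m / (m + t)` for every `m`, which is at least `h(𝓖)`.
Finally the growth rate of a set of concatenations is at most the larger of the two growth rates,
so the decomposition gives `h(𝓛) ≤ max (h(𝓒ᵖ ∪ 𝓒ˢ)) (h(𝓖))`, and Condition (II) leaves
`h(𝓛) ≤ h(𝓖)`.
-/

open MeasureTheory Filter Topology
open scoped ENNReal

/-- The full two-sided shift on `p` symbols. -/
abbrev FullShift (p : ℕ) : Type := ℤ → Fin p

/-- The left shift map. -/
def shiftMap {p : ℕ} : FullShift p → FullShift p := fun x n => x (n + 1)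

/-- A (two-sided) shift space: a nonempty closed shift-invariant subset of the full shift. -/
def IsShiftSpace {p : ℕ} (X : Set (FullShift p)) : Prop :=
  X.Nonempty ∧ IsClosed X ∧ shiftMap '' X = X

/-- `x` spells the word `w` starting at position `k`. -/
def spellsAt {p : ℕ} (x : FullShift p) (k : ℤ) (w : List (Fin p)) : Prop :=
  ∀ i : Fin w.length, x (k + (i : ℕ)) = w.get i

/-- The language of a shift space: all finite words occurring in its sequences. -/
def language {p : ℕ} (X : Set (FullShift p)) : Set (List (Fin p)) :=
  {w | ∃ x ∈ X, ∃ k : ℤ, spellsAt x k w}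

/-- Words of length `n` in a collection `D`. -/
def wordsOfLen {p : ℕ} (D : Set (List (Fin p))) (n : ℕ) : Set (List (Fin p)) :=
  {w ∈ D | w.length = n}

/-- Exponential growth rate `h(D) = limsup (1/n) log #D_n` of a collection of words. -/
noncomputable def growth {p : ℕ} (D : Set (List (Fin p))) : ℝ :=
  Filter.atTop.limsup fun n : ℕ => Real.log ((wordsOfLen D n).ncard) / n

/-- Topological entropy of a shift space (= the growth rate of its language). -/
noncomputable def htop {p : ℕ} (X : Set (FullShift p)) : ℝ := growth (language X)

/-- `glueWords m w v = w 0 ++ v 0 ++ w 1 ++ v 1 ++ ⋯ ++ v (m-1) ++ w m`. -/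
def glueWords {p : ℕ} : ℕ → (ℕ → List (Fin p)) → (ℕ → List (Fin p)) → List (Fin p)
  | 0, w, _ => w 0
  | (m + 1), w, v => glueWords m w v ++ v m ++ w (m + 1)

/-- (S)-specification on `G ⊆ L` with gap size `t`. -/
def HasSpecS {p : ℕ} (L G : Set (List (Fin p))) (t : ℕ) : Prop :=
  ∀ (m : ℕ) (w : ℕ → List (Fin p)), (∀ i ≤ m, w i ∈ G) →
    ∃ v : ℕ → List (Fin p), (∀ i < m, v i ∈ L ∧ (v i).length = t) ∧
      glueWords m w v ∈ L

/-- The central cylinder of a word `w`, starting at position `-⌊|w|/2⌋`. -/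
def centralCylinder {p : ℕ} (w : List (Fin p)) : Set (FullShift p) :=
  {x | spellsAt x (-((w.length / 2 : ℕ) : ℤ)) w}

/-- (Per)-specification on `G` with gap size `t`: the glued word can moreover be realized by
a periodic point of period exactly `|x| + t`. -/
def HasSpecPer {p : ℕ} (X : Set (FullShift p)) (G : Set (List (Fin p))) (t : ℕ) : Prop :=
  ∀ (m : ℕ) (w : ℕ → List (Fin p)), (∀ i ≤ m, w i ∈ G) →
    ∃ v : ℕ → List (Fin p), (∀ i < m, v i ∈ language X ∧ (v i).length = t) ∧
      glueWords m w v ∈ language X ∧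
      ∃ z ∈ X, shiftMap^[(glueWords m w v).length + t] z = z ∧
        z ∈ centralCylinder (glueWords m w v)

/-- A decomposition `L = 𝓒ᵖ 𝓖 𝓒ˢ` of a language. -/
def Decomp {p : ℕ} (L Cp G Cs : Set (List (Fin p))) : Prop :=
  Cp ⊆ L ∧ G ⊆ L ∧ Cs ⊆ L ∧
    ∀ w ∈ L, ∃ u v x, u ∈ Cp ∧ v ∈ G ∧ x ∈ Cs ∧ w = u ++ v ++ x

/-- `𝓖(M)`: words of `L` decomposable with prefix and suffix of length at most `M`. -/
def GM {p : ℕ} (L Cp G Cs : Set (List (Fin p))) (M : ℕ) : Set (List (Fin p)) :=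
  {w ∈ L | ∃ u v x, u ∈ Cp ∧ v ∈ G ∧ x ∈ Cs ∧ u.length ≤ M ∧ x.length ≤ M ∧ w = u ++ v ++ x}

/-- Condition (III): uniformly controlled extension of words of `𝓖(M)` to words of `𝓖`. -/
def CondIII {p : ℕ} (L Cp G Cs : Set (List (Fin p))) : Prop :=
  ∀ M : ℕ, ∃ τ : ℕ, ∀ v ∈ GM L Cp G Cs M,
    ∃ u w : List (Fin p), u.length ≤ τ ∧ w.length ≤ τ ∧ u ++ v ++ w ∈ G

/-- Shift invariance of a measure. -/
def ShiftInvariant {p : ℕ} (μ : Measure (FullShift p)) : Prop :=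
  Measure.map shiftMap μ = μ

/-- Measure-theoretic (Kolmogorov–Sinai) entropy of a shift-invariant measure, computed via
the generating partitions into cylinders of length `n`. -/
noncomputable def entropyOf {p : ℕ} (μ : Measure (FullShift p)) : ℝ :=
  Filter.atTop.liminf fun n : ℕ =>
    (∑ w : Fin n → Fin p,
      Real.negMulLog (μ {x : FullShift p | ∀ i : Fin n, x ((i : ℕ) : ℤ) = w i}).toReal) / n

/-- `μ` is a measure of maximal entropy for the shift space `X`. -/
def IsMME {p : ℕ} (X : Set (FullShift p)) (μ : Measure (FullShift p)) : Prop :=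
  IsProbabilityMeasure μ ∧ ShiftInvariant μ ∧ μ X = 1 ∧ entropyOf μ = htop X

/-- A shift space is intrinsically ergodic if it has exactly one measure of maximal entropy. -/
def IntrinsicallyErgodic {p : ℕ} (X : Set (FullShift p)) : Prop :=
  ∃! μ : Measure (FullShift p), IsMME X μ

/-- The set of points of `X` periodic of period at most `n`. -/
def PerN {p : ℕ} (X : Set (FullShift p)) (n : ℕ) : Set (FullShift p) :=
  {x ∈ X | ∃ k, 1 ≤ k ∧ k ≤ n ∧ shiftMap^[k] x = x}

/-- The measure evenly distributed on the periodic points of period at most `n`. -/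
noncomputable def perMeasure {p : ℕ} (X : Set (FullShift p)) (n : ℕ) :
    Measure (FullShift p) :=
  (((PerN X n).ncard : ℝ≥0∞))⁻¹ •
    Measure.sum (fun x : (PerN X n) => Measure.dirac (x : FullShift p))

/-- Weak* convergence of a sequence of measures. -/
def WeakStarLimit {p : ℕ} (μs : ℕ → Measure (FullShift p)) (μ : Measure (FullShift p)) : Prop :=
  ∀ f : C(FullShift p, ℝ),
    Tendsto (fun n => ∫ x, f x ∂(μs n)) atTop (𝓝 (∫ x, f x ∂μ))

/-- `Y` is a subshift factor of `X`. -/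
def IsSubshiftFactor {p q : ℕ} (X : Set (FullShift p)) (Y : Set (FullShift q)) : Prop :=
  IsShiftSpace Y ∧ ∃ π : FullShift p → FullShift q,
    Continuous π ∧ π '' X = Y ∧ ∀ x ∈ X, π (shiftMap x) = shiftMap (π x)

open Set

section PeriodicPoints

variable {p : ℕ}

lemma shiftMap_iterate_apply (k : ℕ) (x : FullShift p) (n : ℤ) :
    (shiftMap^[k] x) n = x (n + k) := by
  induction k generalizing x with
  | zero => simp
  | succ k ih =>
    rw [Function.iterate_succ_apply, ih, shiftMap, add_right_comm]
    push_cast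
    ring_nf

lemma Function.Periodic.of_shiftMap_iterate {k : ℕ} {x : FullShift p}
    (hx : shiftMap^[k] x = x) : Function.Periodic x (k : ℤ) := fun n => by
  rw [← shiftMap_iterate_apply k x n, hx]

lemma eq_of_shiftMap_iterate_eq {k : ℕ} (hk : 0 < k) {x y : FullShift p}
    (hx : shiftMap^[k] x = x) (hy : shiftMap^[k] y = y) (h : ∀ i < k, x i = y i) : x = y := by
  have hmod : ∀ z : FullShift p, shiftMap^[k] z = z → ∀ m, z m = z (m % k) := fun z hz m => by
    rw [Int.emod_def, mul_comm, ← smul_eq_mul,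
      (Function.Periodic.of_shiftMap_iterate hz).sub_zsmul_eq]
  funext m
  rw [hmod x hx, hmod y hy]
  lift m % k to ℕ using Int.emod_nonneg m (by omega) with r hr
  exact h r (by have := Int.emod_lt_of_pos m (by omega : (0 : ℤ) < k); omega)

lemma wordsOfLen_finite (D : Set (List (Fin p))) (n : ℕ) : (wordsOfLen D n).Finite :=
  (List.finite_length_eq (Fin p) n).subset fun _ hw => hw.2

lemma ofFn_mem_wordsOfLen_language {X : Set (FullShift p)} {x : FullShift p} (hx : x ∈ X)
    (n : ℕ) : List.ofFn (fun i : Fin n => x i) ∈ wordsOfLen (language X) n :=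
  ⟨⟨x, hx, 0, fun i => by simp⟩, List.length_ofFn⟩

lemma injOn_ofFn_fixedPoints (X : Set (FullShift p)) {k n : ℕ} (hk : 0 < k) (hkn : k ≤ n) :
    InjOn (fun x : FullShift p => List.ofFn fun i : Fin n => x i)
      {x ∈ X | shiftMap^[k] x = x} := by
  intro x hx y hy hxy
  refine eq_of_shiftMap_iterate_eq hk hx.2 hy.2 fun i hi => ?_
  simpa using congrFun (List.ofFn_inj.mp hxy) ⟨i, hi.trans_le hkn⟩

lemma fixedPoints_finite (X : Set (FullShift p)) {k : ℕ} (hk : 0 < k) :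
    {x ∈ X | shiftMap^[k] x = x}.Finite :=
  Finite.of_injOn (fun _ hx => ofFn_mem_wordsOfLen_language hx.1 k)
    (injOn_ofFn_fixedPoints X hk le_rfl) (wordsOfLen_finite _ k)

lemma ncard_fixedPoints_le (X : Set (FullShift p)) {k n : ℕ} (hk : 0 < k) (hkn : k ≤ n) :
    {x ∈ X | shiftMap^[k] x = x}.ncard ≤ (wordsOfLen (language X) n).ncard :=
  ncard_le_ncard_of_injOn _ (fun _ hx => ofFn_mem_wordsOfLen_language hx.1 n)
    (injOn_ofFn_fixedPoints X hk hkn) (wordsOfLen_finite _ n)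

lemma PerN_eq_iUnion (X : Set (FullShift p)) (n : ℕ) :
    PerN X n = ⋃ k : Fin n, {x ∈ X | shiftMap^[k + 1] x = x} := by
  ext x
  simp only [PerN, mem_ofPred_eq, mem_iUnion]
  constructor
  · rintro ⟨hx, k, hk1, hkn, hper⟩
    exact ⟨⟨k - 1, by omega⟩, hx, by rwa [Nat.sub_add_cancel hk1]⟩
  · rintro ⟨k, hx, hper⟩
    exact ⟨hx, k + 1, by omega, k.isLt, hper⟩

lemma PerN_finite (X : Set (FullShift p)) (n : ℕ) : (PerN X n).Finite := by
  rw [PerN_eq_iUnion]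
  exact finite_iUnion fun k => fixedPoints_finite X k.succ_pos

lemma ncard_PerN_le (X : Set (FullShift p)) (n : ℕ) :
    (PerN X n).ncard ≤ n * (wordsOfLen (language X) n).ncard := by
  rw [PerN_eq_iUnion]
  calc _ ≤ ∑ k : Fin n, {x ∈ X | shiftMap^[k + 1] x = x}.ncard := ncard_iUnion_le_of_fintype _
    _ ≤ ∑ _k : Fin n, (wordsOfLen (language X) n).ncard :=
        Finset.sum_le_sum fun k _ => ncard_fixedPoints_le X k.succ_pos k.isLt
    _ = n * (wordsOfLen (language X) n).ncard := by simp

lemma PerN_mono (X : Set (FullShift p)) : Monotone (PerN X) :=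
  fun _ _ hmn _ ⟨hx, k, hk1, hkm, hper⟩ => ⟨hx, k, hk1, hkm.trans hmn, hper⟩

end PeriodicPoints

section LogRate

lemma Real.log_natCast_mono : Monotone fun n : ℕ => Real.log n := by
  intro a b hab
  rcases Nat.eq_zero_or_pos a with rfl | ha
  · simpa using Real.log_natCast_nonneg b
  · exact Real.log_le_log (by exact_mod_cast ha) (by exact_mod_cast hab)

lemma tendsto_log_natCast_add_one_div :
    Tendsto (fun n : ℕ => Real.log (n + 1) / n) atTop (𝓝 0) := by
  simpa [Function.comp_def] using
    (Real.tendsto_pow_log_div_mul_add_atTop 1 (-1) 1 one_ne_zero).comp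
      (tendsto_atTop_add_const_right _ 1 tendsto_natCast_atTop_atTop)

lemma isBoundedUnder_ge_log_div (N : ℕ → ℕ) :
    IsBoundedUnder (· ≥ ·) atTop fun n : ℕ => Real.log (N n) / n :=
  isBoundedUnder_of ⟨0, fun n => div_nonneg (Real.log_natCast_nonneg _) n.cast_nonneg⟩

lemma limsup_le_limsup_of_le_add {ι : Type*} {f : Filter ι} [f.NeBot] {u v e : ι → ℝ}
    (hu : IsBoundedUnder (· ≥ ·) f u) (hv : IsBoundedUnder (· ≥ ·) f v)
    (hv' : IsBoundedUnder (· ≤ ·) f v) (he : Tendsto e f (𝓝 0))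
    (h : ∀ᶠ i in f, u i ≤ v i + e i) : limsup u f ≤ limsup v f :=
  calc limsup u f ≤ limsup (v + e) f :=
        limsup_le_limsup h hu.isCoboundedUnder_le (isBoundedUnder_le_add hv' he.isBoundedUnder_le)
    _ ≤ limsup v f + limsup e f :=
        limsup_add_le hv hv' he.isBoundedUnder_ge.isCoboundedUnder_le he.isBoundedUnder_le
    _ = limsup v f := by rw [he.limsup_eq, add_zero]

lemma le_liminf_log_div_of_pow_le {N : ℕ → ℕ} (hN : Monotone N)
    (hbdd : IsBoundedUnder (· ≤ ·) atTop fun n : ℕ => Real.log (N n) / n) {b K : ℕ} (hK : 0 < K)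
    (h : ∀ q, 0 < q → b ^ q ≤ N (q * K)) :
    Real.log b / K ≤ liminf (fun n : ℕ => Real.log (N n) / n) atTop := by
  have hlim : Tendsto (fun n : ℕ => Real.log b / K - Real.log b / n) atTop
      (𝓝 (Real.log b / K)) := by
    simpa using tendsto_const_nhds.sub (tendsto_const_div_atTop_nhds_zero_nat (Real.log b))
  have hle : ∀ᶠ n : ℕ in atTop, Real.log b / K - Real.log b / n ≤ Real.log (N n) / n := by
    filter_upwards [eventually_ge_atTop K] with n hn
    have hn0 : (0 : ℝ) < n := by exact_mod_cast hK.trans_le hn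
    have hq : 0 < n / K := Nat.div_pos hn hK
    have hqK : (n : ℝ) / K - 1 ≤ (n / K : ℕ) := by
      rw [div_sub_one (by positivity), div_le_iff₀ (by exact_mod_cast hK)]
      exact_mod_cast (by have := Nat.lt_div_mul_add (a := n) hK; omega : n - K ≤ n / K * K)
    have hlog : ((n / K : ℕ) : ℝ) * Real.log b ≤ Real.log (N n) := by
      rw [← Real.log_pow]
      exact_mod_cast Real.log_natCast_mono ((h _ hq).trans (hN (Nat.div_mul_le_self n K)))
    rw [le_div_iff₀ hn0]
    calc (Real.log b / K - Real.log b / n) * n = ((n : ℝ) / K - 1) * Real.log b := by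
          field_simp
      _ ≤ _ := (mul_le_mul_of_nonneg_right hqK (Real.log_natCast_nonneg b)).trans hlog
  rw [← hlim.liminf_eq]
  exact liminf_le_liminf hle hlim.isBoundedUnder_ge hbdd.isCoboundedUnder_ge

end LogRate

section GrowthRate

variable {p : ℕ}

lemma ncard_wordsOfLen_le_pow (D : Set (List (Fin p))) (n : ℕ) :
    (wordsOfLen D n).ncard ≤ p ^ n := by
  calc (wordsOfLen D n).ncard ≤ (range (List.ofFn : (Fin n → Fin p) → _)).ncard :=
        ncard_le_ncard (fun w hw => ⟨fun i => w.get (i.cast hw.2.symm), by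
          apply List.ext_get <;> simp [hw.2]⟩) (finite_range _)
    _ = p ^ n := by simp [ncard_range_of_injective List.ofFn_injective]

lemma isBoundedUnder_le_log_ncard_wordsOfLen_div (D : Set (List (Fin p))) :
    IsBoundedUnder (· ≤ ·) atTop fun n : ℕ => Real.log (wordsOfLen D n).ncard / n := by
  refine isBoundedUnder_of ⟨Real.log p, fun n => ?_⟩
  rcases Nat.eq_zero_or_pos n with rfl | hn
  · simpa using Real.log_natCast_nonneg p
  rw [div_le_iff₀ (by exact_mod_cast hn), mul_comm, ← Real.log_pow]
  exact_mod_cast Real.log_natCast_mono (ncard_wordsOfLen_le_pow D n)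

lemma growth_nonneg (D : Set (List (Fin p))) : 0 ≤ growth D :=
  le_limsup_of_frequently_le
    (Frequently.of_forall fun n => div_nonneg (Real.log_natCast_nonneg _) n.cast_nonneg)
    (isBoundedUnder_le_log_ncard_wordsOfLen_div D)

lemma growth_mono {D E : Set (List (Fin p))} (h : D ⊆ E) : growth D ≤ growth E :=
  limsup_le_limsup
    (Eventually.of_forall fun n => div_le_div_of_nonneg_right
      (Real.log_natCast_mono (ncard_le_ncard (fun _ hw => ⟨h hw.1, hw.2⟩)
        (wordsOfLen_finite E n))) n.cast_nonneg)
    (isBoundedUnder_ge_log_div _).isCoboundedUnder_le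
    (isBoundedUnder_le_log_ncard_wordsOfLen_div E)

lemma exists_ncard_wordsOfLen_le_mul_exp (D : Set (List (Fin p))) {ε : ℝ} (hε : 0 < ε) :
    ∃ C : ℝ, 1 ≤ C ∧ ∀ n : ℕ,
      ((wordsOfLen D n).ncard : ℝ) ≤ C * Real.exp ((growth D + ε) * n) := by
  obtain ⟨N, hN⟩ := eventually_atTop.mp <| (eventually_gt_atTop 0).and <|
    eventually_lt_of_limsup_lt (lt_add_of_pos_right (growth D) hε)
      (isBoundedUnder_le_log_ncard_wordsOfLen_div D)
  -- below `N` the trivial bound `p ^ n` suffices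
  refine ⟨((p + 1) ^ N : ℕ), by exact_mod_cast Nat.one_le_pow _ _ p.succ_pos, fun n => ?_⟩
  have hexp : 1 ≤ Real.exp ((growth D + ε) * n) :=
    Real.one_le_exp (by have := growth_nonneg D; positivity)
  rcases lt_or_ge n N with hn | hn
  · have : (wordsOfLen D n).ncard ≤ (p + 1) ^ N :=
      (ncard_wordsOfLen_le_pow D n).trans
        ((Nat.pow_le_pow_left p.le_succ n).trans (Nat.pow_le_pow_right p.succ_pos hn.le))
    calc ((wordsOfLen D n).ncard : ℝ) ≤ ((p + 1) ^ N : ℕ) := by exact_mod_cast this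
      _ ≤ _ := le_mul_of_one_le_right (Nat.cast_nonneg _) hexp
  · refine le_trans ?_ (le_mul_of_one_le_left (Real.exp_nonneg _)
      (by exact_mod_cast Nat.one_le_pow _ _ p.succ_pos))
    rcases Nat.eq_zero_or_pos (wordsOfLen D n).ncard with h0 | hpos
    · simpa [h0] using hexp.trans' zero_le_one
    obtain ⟨hn0, hlt⟩ := hN n hn
    rw [← Real.exp_log (by exact_mod_cast hpos : (0 : ℝ) < (wordsOfLen D n).ncard)]
    exact Real.exp_le_exp.mpr ((div_le_iff₀ (by exact_mod_cast hn0)).mp hlt.le)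

lemma growth_le_of_ncard_le {D : Set (List (Fin p))} {a C : ℝ} (ha : 0 ≤ a) (hC : 1 ≤ C)
    (h : ∀ n : ℕ, ((wordsOfLen D n).ncard : ℝ) ≤ C * (n + 1) * Real.exp (a * n)) :
    growth D ≤ a := by
  have he : Tendsto (fun n : ℕ => (Real.log C + Real.log (n + 1)) / n) atTop (𝓝 0) := by
    simpa [add_div] using
      (tendsto_const_div_atTop_nhds_zero_nat (Real.log C)).add tendsto_log_natCast_add_one_div
  have hle : ∀ᶠ n : ℕ in atTop, Real.log (wordsOfLen D n).ncard / n ≤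
      a + (Real.log C + Real.log (n + 1)) / n := by
    filter_upwards [eventually_gt_atTop 0] with n hn
    have hn0 : (0 : ℝ) < n := by exact_mod_cast hn
    rcases Nat.eq_zero_or_pos (wordsOfLen D n).ncard with h0 | hpos
    · rw [h0, Nat.cast_zero, Real.log_zero, zero_div]
      have : 0 ≤ Real.log C + Real.log (n + 1) :=
        add_nonneg (Real.log_nonneg hC) (Real.log_nonneg (by linarith))
      positivity
    rw [div_le_iff₀ hn0, add_mul, div_mul_cancel₀ _ hn0.ne']
    calc Real.log (wordsOfLen D n).ncard ≤ Real.log (C * (n + 1) * Real.exp (a * n)) :=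
          Real.log_le_log (by exact_mod_cast hpos) (h n)
      _ = a * n + (Real.log C + Real.log (n + 1)) := by
          rw [Real.log_mul (by positivity) (by positivity), Real.log_exp,
            Real.log_mul (by positivity) (by positivity)]
          ring
  calc growth D ≤ limsup (fun _ : ℕ => a) atTop :=
        limsup_le_limsup_of_le_add (isBoundedUnder_ge_log_div _) isBoundedUnder_const
          isBoundedUnder_const he hle
    _ = a := limsup_const a

lemma ncard_wordsOfLen_image2_append_le (A B : Set (List (Fin p))) (n : ℕ) :
    (wordsOfLen (image2 (· ++ ·) A B) n).ncard ≤
      ∑ i ∈ Finset.range (n + 1), (wordsOfLen A i).ncard * (wordsOfLen B (n - i)).ncard := by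
  have hsub : wordsOfLen (image2 (· ++ ·) A B) n ⊆
      ⋃ i ∈ Finset.range (n + 1), image2 (· ++ ·) (wordsOfLen A i) (wordsOfLen B (n - i)) := by
    rintro _ ⟨⟨u, hu, v, hv, rfl⟩, hlen⟩
    rw [List.length_append] at hlen
    exact mem_biUnion (Finset.mem_range.mpr (by omega : u.length < n + 1))
      ⟨u, ⟨hu, rfl⟩, v, ⟨hv, by omega⟩, rfl⟩
  have hfin : ∀ i, (wordsOfLen A i ×ˢ wordsOfLen B (n - i)).Finite := fun i =>
    (wordsOfLen_finite A i).prod (wordsOfLen_finite B (n - i))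
  calc _ ≤ _ := ncard_le_ncard hsub
        ((Finset.range (n + 1)).finite_toSet.biUnion fun i _ => by
          rw [← image_uncurry_prod]; exact (hfin i).image _)
    _ ≤ _ := Finset.set_ncard_biUnion_le _ _
    _ ≤ _ := Finset.sum_le_sum fun i _ => by
        rw [← image_uncurry_prod, ← ncard_prod]; exact ncard_image_le (hfin i)

lemma growth_image2_append_le (A B : Set (List (Fin p))) :
    growth (image2 (· ++ ·) A B) ≤ max (growth A) (growth B) := by
  set a := max (growth A) (growth B)
  refine le_of_forall_pos_le_add fun ε hε => ?_
  obtain ⟨CA, hCA, hA⟩ := exists_ncard_wordsOfLen_le_mul_exp A hε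
  obtain ⟨CB, hCB, hB⟩ := exists_ncard_wordsOfLen_le_mul_exp B hε
  refine growth_le_of_ncard_le (by have := growth_nonneg A; positivity)
    (one_le_mul_of_one_le_of_one_le hCA hCB) fun n => ?_
  calc ((wordsOfLen (image2 (· ++ ·) A B) n).ncard : ℝ)
      ≤ ∑ i ∈ Finset.range (n + 1),
          ((wordsOfLen A i).ncard : ℝ) * (wordsOfLen B (n - i)).ncard := by
        exact_mod_cast ncard_wordsOfLen_image2_append_le A B n
    _ ≤ ∑ i ∈ Finset.range (n + 1), CA * CB * Real.exp ((a + ε) * n) := by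
        refine Finset.sum_le_sum fun i hi => ?_
        have hin : ((n - i : ℕ) : ℝ) = n - i := Nat.cast_sub (Finset.mem_range_succ_iff.mp hi)
        calc _ ≤ (CA * Real.exp ((a + ε) * i)) * (CB * Real.exp ((a + ε) * (n - i : ℕ))) := by
              gcongr
              · exact (hA i).trans (by gcongr; exact le_max_left _ _)
              · exact (hB _).trans (by gcongr; exact le_max_right _ _)
          _ = _ := by rw [hin, mul_mul_mul_comm, ← Real.exp_add]; ring_nf
    _ = CA * CB * (n + 1) * Real.exp ((a + ε) * n) := by
        rw [Finset.sum_const, Finset.card_range, nsmul_eq_mul]; push_cast; ring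

lemma htop_le_max_growth {X : Set (FullShift p)} {Cp G Cs : Set (List (Fin p))}
    (hdec : Decomp (language X) Cp G Cs) : htop X ≤ max (growth (Cp ∪ Cs)) (growth G) := by
  have hsub : language X ⊆ image2 (· ++ ·) (image2 (· ++ ·) Cp G) Cs := fun w hw => by
    obtain ⟨u, v, x, hu, hv, hx, rfl⟩ := hdec.2.2.2 w hw
    exact mem_image2_of_mem (mem_image2_of_mem hu hv) hx
  have hCp := growth_mono (subset_union_left : Cp ⊆ Cp ∪ Cs)
  have hCs := growth_mono (subset_union_right : Cs ⊆ Cp ∪ Cs)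
  calc htop X ≤ growth (image2 (· ++ ·) (image2 (· ++ ·) Cp G) Cs) := growth_mono hsub
    _ ≤ max (max (growth Cp) (growth G)) (growth Cs) :=
        (growth_image2_append_le _ _).trans (max_le_max_right _ (growth_image2_append_le _ _))
    _ ≤ _ := max_le (max_le_max_right _ hCp) (hCs.trans (le_max_left _ _))

end GrowthRate

section Specification

variable {p : ℕ}

lemma glueWords_length {m n t : ℕ} {w v : ℕ → List (Fin p)}
    (hw : ∀ i ≤ m, (w i).length = n) (hv : ∀ i < m, (v i).length = t) :
    (glueWords m w v).length = (m + 1) * n + m * t := by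
  induction m with
  | zero => simpa [glueWords] using hw 0 le_rfl
  | succ m ih =>
    rw [glueWords, List.length_append, List.length_append,
      ih (fun i hi => hw i (by omega)) (fun i hi => hv i (by omega)), hv m m.lt_succ_self,
      hw (m + 1) le_rfl]
    ring

lemma eq_of_glueWords_eq {m : ℕ} {w w' v v' : ℕ → List (Fin p)}
    (hw : ∀ i ≤ m, (w i).length = (w' i).length) (hv : ∀ i < m, (v i).length = (v' i).length)
    (h : glueWords m w v = glueWords m w' v') : ∀ i ≤ m, w i = w' i := by
  induction m with
  | zero => intro i hi; obtain rfl := Nat.le_zero.mp hi; exact h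
  | succ m ih =>
    obtain ⟨h', hlast⟩ := List.append_inj' h (hw (m + 1) le_rfl)
    intro i hi
    rcases Nat.lt_or_eq_of_le hi with hi | rfl
    · exact ih (fun j hj => hw j (by omega)) (fun j hj => hv j (by omega))
        (List.append_inj' h' (hv m m.lt_succ_self)).1 i (by omega)
    · exact hlast

lemma eq_of_mem_centralCylinder {z : FullShift p} {w w' : List (Fin p)}
    (h : z ∈ centralCylinder w) (h' : z ∈ centralCylinder w') (hlen : w.length = w'.length) :
    w = w' := by
  rw [centralCylinder, mem_ofPred_eq, ← hlen] at h'
  exact List.ext_get hlen fun i hi hi' => (h ⟨i, hi⟩).symm.trans (h' ⟨i, hi'⟩)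

lemma pow_ncard_wordsOfLen_le_ncard_PerN {X : Set (FullShift p)} {G : Set (List (Fin p))}
    {t : ℕ} (hspec : HasSpecPer X G t) {n : ℕ} (hn : 0 < n) (m : ℕ) :
    (wordsOfLen G n).ncard ^ (m + 1) ≤ (PerN X ((m + 1) * (n + t))).ncard := by
  set S := wordsOfLen G n
  let word (f : Fin (m + 1) → S) (i : ℕ) : List (Fin p) :=
    if h : i < m + 1 then f ⟨i, h⟩ else []
  have hword : ∀ f i, i ≤ m → word f i ∈ G ∧ (word f i).length = n := fun f i hi => by
    simp only [word, dif_pos (Nat.lt_succ_of_le hi)]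
    exact (f _).2
  choose v hv _ z hzX hzper hzcyl using fun f => hspec m (word f) fun i hi => (hword f i hi).1
  have hlen : ∀ f, (glueWords m (word f) (v f)).length = (m + 1) * n + m * t := fun f =>
    glueWords_length (fun i hi => (hword f i hi).2) fun i hi => (hv f i hi).2
  have hmem : ∀ f, z f ∈ PerN X ((m + 1) * (n + t)) := fun f =>
    ⟨hzX f, _, by rw [hlen]; nlinarith, by rw [hlen]; nlinarith, hzper f⟩
  have hinj : Function.Injective fun f => (⟨z f, hmem f⟩ : PerN X ((m + 1) * (n + t))) := by
    intro f f' hff'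
    have hz : z f = z f' := congrArg Subtype.val hff'
    have hglue := eq_of_mem_centralCylinder (hzcyl f) (hz ▸ hzcyl f') (by rw [hlen, hlen])
    have hpieces := eq_of_glueWords_eq
      (fun i hi => by rw [(hword f i hi).2, (hword f' i hi).2])
      (fun i hi => by rw [(hv f i hi).2, (hv f' i hi).2]) hglue
    funext i
    have hi := hpieces i (by omega)
    simp only [word, dif_pos i.isLt] at hi
    exact Subtype.ext hi
  have := (PerN_finite X ((m + 1) * (n + t))).to_subtype
  have hcard := Nat.card_le_card_of_injective _ hinj
  rwa [Nat.card_fun, Nat.card_fin, Nat.card_coe_set_eq, Nat.card_coe_set_eq] at hcard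

end Specification

section PeriodicGrowth

variable {p : ℕ}

lemma log_ncard_PerN_div_le (X : Set (FullShift p)) (n : ℕ) :
    Real.log (PerN X n).ncard / n ≤
      Real.log (wordsOfLen (language X) n).ncard / n + Real.log (n + 1) / n := by
  rw [← add_div]
  refine div_le_div_of_nonneg_right ?_ n.cast_nonneg
  rcases Nat.eq_zero_or_pos (PerN X n).ncard with h0 | hpos
  · rw [h0, Nat.cast_zero, Real.log_zero]
    exact add_nonneg (Real.log_natCast_nonneg _) (Real.log_nonneg (by simp))
  have hle : ((PerN X n).ncard : ℝ) ≤ (wordsOfLen (language X) n).ncard * (n + 1) := by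
    calc ((PerN X n).ncard : ℝ) ≤ n * (wordsOfLen (language X) n).ncard := by
          exact_mod_cast ncard_PerN_le X n
      _ ≤ _ := by rw [mul_comm]; gcongr; linarith
  have hL : (0 : ℝ) < (wordsOfLen (language X) n).ncard :=
    pos_of_mul_pos_left ((Nat.cast_pos.mpr hpos).trans_le hle) (by positivity)
  rw [← Real.log_mul hL.ne' (by positivity)]
  exact Real.log_le_log (by exact_mod_cast hpos) hle

lemma isBoundedUnder_le_log_ncard_PerN_div (X : Set (FullShift p)) :
    IsBoundedUnder (· ≤ ·) atTop fun n : ℕ => Real.log (PerN X n).ncard / n :=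
  (isBoundedUnder_le_add (isBoundedUnder_le_log_ncard_wordsOfLen_div _)
    tendsto_log_natCast_add_one_div.isBoundedUnder_le).mono_le
    (Eventually.of_forall (log_ncard_PerN_div_le X))

lemma limsup_log_ncard_PerN_div_le (X : Set (FullShift p)) :
    limsup (fun n : ℕ => Real.log (PerN X n).ncard / n) atTop ≤ htop X :=
  limsup_le_limsup_of_le_add (isBoundedUnder_ge_log_div _) (isBoundedUnder_ge_log_div _)
    (isBoundedUnder_le_log_ncard_wordsOfLen_div _) tendsto_log_natCast_add_one_div
    (Eventually.of_forall (log_ncard_PerN_div_le X))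

lemma growth_le_liminf_log_ncard_PerN_div {X : Set (FullShift p)} {G : Set (List (Fin p))}
    {t : ℕ} (hspec : HasSpecPer X G t) :
    growth G ≤ liminf (fun n : ℕ => Real.log (PerN X n).ncard / n) atTop := by
  set L := liminf (fun n : ℕ => Real.log (PerN X n).ncard / n) atTop
  have hblock : ∀ n, 0 < n → Real.log (wordsOfLen G n).ncard ≤ L * (n + t) := fun n hn => by
    have := le_liminf_log_div_of_pow_le
      (fun _ _ hab => ncard_le_ncard (PerN_mono X hab) (PerN_finite X _))
      (isBoundedUnder_le_log_ncard_PerN_div X) (K := n + t) (by omega) fun q hq => by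
        obtain ⟨m, rfl⟩ := Nat.exists_eq_add_of_lt hq
        simpa using pow_ncard_wordsOfLen_le_ncard_PerN hspec hn m
    rwa [Nat.cast_add, div_le_iff₀ (by positivity)] at this
  have hle : ∀ᶠ n : ℕ in atTop,
      Real.log (wordsOfLen G n).ncard / n ≤ L + L * t / n := by
    filter_upwards [eventually_gt_atTop 0] with n hn
    have hn0 : (0 : ℝ) < n := by exact_mod_cast hn
    rw [div_le_iff₀ hn0, add_mul, div_mul_cancel₀ _ hn0.ne']
    linarith [hblock n hn]
  calc growth G ≤ limsup (fun _ : ℕ => L) atTop :=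
        limsup_le_limsup_of_le_add (isBoundedUnder_ge_log_div _) isBoundedUnder_const
          isBoundedUnder_const (tendsto_const_div_atTop_nhds_zero_nat (L * t)) hle
    _ = L := limsup_const L

end PeriodicGrowth

theorem periodic_growth_eq_entropy_general {p : ℕ} (X : Set (FullShift p))
    (Cp G Cs : Set (List (Fin p)))
    (hdec : Decomp (language X) Cp G Cs)
    (hII : growth (Cp ∪ Cs) < htop X)
    (hPer : ∃ t : ℕ, HasSpecPer X G t) :
    Filter.Tendsto (fun n : ℕ => Real.log ((PerN X n).ncard) / n)
      Filter.atTop (nhds (htop X)) := by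
  obtain ⟨t, hspec⟩ := hPer
  have hG : htop X ≤ growth G :=
    (le_max_iff.mp (htop_le_max_growth hdec)).resolve_left hII.not_ge
  exact tendsto_of_le_liminf_of_limsup_le (hG.trans (growth_le_liminf_log_ncard_PerN_div hspec))
    (limsup_log_ncard_PerN_div_le X) (isBoundedUnder_le_log_ncard_PerN_div X)
    (isBoundedUnder_ge_log_div _)

/-- **Section 5.6.** Under Conditions (I) and (II), if `𝓖` has (Per)-specification, then
`lim (1/n) log #Per(n) = h(𝓛) = h_top(X,σ)`. -/
theorem periodic_growth_eq_entropy {p : ℕ} (X : Set (FullShift p))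
    (hX : IsShiftSpace X) (Cp G Cs : Set (List (Fin p)))
    (hdec : Decomp (language X) Cp G Cs)
    (hI : ∃ t : ℕ, HasSpecS (language X) G t)
    (hII : growth (Cp ∪ Cs) < htop X)
    (hPer : ∃ t : ℕ, HasSpecPer X G t) :
    Filter.Tendsto (fun n : ℕ => Real.log ((PerN X n).ncard) / n)
      Filter.atTop (nhds (htop X)) :=
  periodic_growth_eq_entropy_general X Cp G Cs hdec hII hPer
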